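/- arXiv:2110.01800 — 6 statements merged into one kernel-verified Lean document; each statement's English description precedes it below -/
import Mathlib

section
/- Let f:(0,∞)→(0,∞) be a strictly increasing continuous bijection onto (0,∞) with inverse f^{-1}, and suppose there are c>0, γ>0 such that f(R)/f(r) ≤ c (R/r)^{γ} for all 0 < r ≤ R < ∞. Then for every k>0 there is a constant C>0 (depending only on c, γ, k) such that for all b>0, ∫_{1/f(1/b)}^{∞} s^{-1} (f^{-1}(1/s))^{k} ds ≤ C b^{-k}. -/
open MeasureTheory

theorem stmt_6 (f finv : ℝ → ℝ) (c γ : ℝ) (hc : 0 < c) (hγ : 0 < γ)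
    (hfpos : ∀ x > 0, 0 < f x)
    (hmono : StrictMonoOn f (Set.Ioi 0))
    (hcont : ContinuousOn f (Set.Ioi 0))
    (hleft : ∀ x > 0, finv (f x) = x)
    (hright : ∀ y > 0, 0 < finv y ∧ f (finv y) = y)
    (hscal : ∀ r R : ℝ, 0 < r → r ≤ R → f R / f r ≤ c * (R / r) ^ γ) :
    ∀ k : ℝ, 0 < k → ∃ C > 0, ∀ b > 0,
      (∫ s in Set.Ioi (f b⁻¹)⁻¹, s⁻¹ * (finv s⁻¹) ^ k) ≤ C * b ^ (-k) := by
  intro k hk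
  have hkγ : 0 < k / γ := div_pos hk hγ
  refine ⟨c ^ (k / γ) * (γ / k), by positivity, ?_⟩
  intro b hb
  have hbi : 0 < b⁻¹ := inv_pos.mpr hb
  have hT : 0 < f b⁻¹ := hfpos _ hbi
  set T : ℝ := f b⁻¹ with hTdef
  set a : ℝ := T⁻¹ with hadef
  have ha0 : 0 < a := inv_pos.mpr hT
  set K : ℝ := c ^ (k / γ) * b ^ (-k) * a ^ (k / γ) with hKdef
  have hK0 : 0 < K := by positivity
  have hexp : (-1 - k / γ : ℝ) < -1 := by linarith
  -- pointwise bound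
  have hpt : ∀ s ∈ Set.Ioi a, s⁻¹ * (finv s⁻¹) ^ k ≤ K * s ^ (-1 - k / γ) := by
    intro s hs
    have hsa : a < s := hs
    have hs0 : 0 < s := ha0.trans hsa
    have ht0 : 0 < s⁻¹ := inv_pos.mpr hs0
    have htT : s⁻¹ < T := by
      rw [← inv_inv T]
      exact inv_strictAnti₀ ha0 hsa
    obtain ⟨hu0, hfu⟩ := hright s⁻¹ ht0
    set u : ℝ := finv s⁻¹ with hudef
    have hub : u < b⁻¹ := by
      have := (hmono.lt_iff_lt (Set.mem_Ioi.mpr hu0) (Set.mem_Ioi.mpr hbi)).mp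
      apply this
      rw [hfu]; exact htT
    have hsc := hscal u b⁻¹ hu0 hub.le
    -- T / s⁻¹ ≤ c * (b⁻¹)^γ / u^γ
    have hsc' : T / s⁻¹ ≤ c * (b⁻¹) ^ γ / u ^ γ := by
      rw [← hfu]
      calc f b⁻¹ / f u ≤ c * (b⁻¹ / u) ^ γ := hsc
        _ = c * (b⁻¹) ^ γ / u ^ γ := by
            rw [Real.div_rpow hbi.le hu0.le]; ring
    have huγ : u ^ γ ≤ c * (b⁻¹) ^ γ * s⁻¹ / T := by
      rw [div_le_div_iff₀ ht0 (by positivity)] at hsc'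
      rw [le_div_iff₀ hT]
      nlinarith [hsc']
    have huk : u ^ k ≤ (c * (b⁻¹) ^ γ * s⁻¹ / T) ^ (k / γ) := by
      have h1 : u ^ k = (u ^ γ) ^ (k / γ) := by
        rw [← Real.rpow_mul hu0.le]
        congr 1
        field_simp
      rw [h1]
      exact Real.rpow_le_rpow (by positivity) huγ hkγ.le
    have hRHS : K * s ^ (-1 - k / γ) = s⁻¹ * ((c * (b⁻¹) ^ γ * s⁻¹ / T) ^ (k / γ)) := by
      rw [Real.div_rpow (by positivity) hT.le,
        Real.mul_rpow (by positivity) (by positivity),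
        Real.mul_rpow hc.le (by positivity),
        ← Real.rpow_mul hbi.le]
      have hγk : γ * (k / γ) = k := by field_simp
      rw [hγk, hKdef, hadef]
      rw [show (-1 - k / γ : ℝ) = (-1) + (-(k/γ)) by ring, Real.rpow_add hs0,
        Real.rpow_neg_one, Real.rpow_neg hs0.le, Real.rpow_neg hb.le,
        Real.inv_rpow hT.le, Real.inv_rpow hs0.le, Real.inv_rpow hb.le]
      ring
    rw [hRHS]
    exact mul_le_mul_of_nonneg_left huk ht0.le
  have hg_int : IntegrableOn (fun s : ℝ => K * s ^ (-1 - k / γ)) (Set.Ioi a) :=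
    (integrableOn_Ioi_rpow_of_lt hexp ha0).const_mul _
  have hg_val : (∫ s in Set.Ioi a, K * s ^ (-1 - k / γ)) = c ^ (k / γ) * (γ / k) * b ^ (-k) := by
    rw [integral_const_mul, integral_Ioi_rpow_of_lt hexp ha0]
    have : (-1 - k / γ + 1 : ℝ) = -(k / γ) := by ring
    rw [this]
    rw [hKdef]
    rw [Real.rpow_neg ha0.le]
    have haγ : a ^ (k / γ) ≠ 0 := by positivity
    field_simp
  by_cases hint : IntegrableOn (fun s : ℝ => s⁻¹ * (finv s⁻¹) ^ k) (Set.Ioi a) volume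
  · calc (∫ s in Set.Ioi a, s⁻¹ * (finv s⁻¹) ^ k)
        ≤ ∫ s in Set.Ioi a, K * s ^ (-1 - k / γ) :=
          setIntegral_mono_on hint hg_int measurableSet_Ioi hpt
      _ = c ^ (k / γ) * (γ / k) * b ^ (-k) := hg_val
  · rw [integral_undef hint]
    positivity
end

section
/- Let 𝒢 be the class of continuous ℓ:(0,∞)→(0,∞) such that for each a>0, sup_{r>1} (∫_1^r ℓ(s)/s ds) exp(−(a/ℓ(r)) ∫_1^r ℓ(s)/s ds) < ∞. If ℓ ∈ 𝒢 and b > 0, then the function r ↦ ℓ(r^b) also belongs to 𝒢. -/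
/-!
With `F r = ∫ s in 1..r, ℓ s / s`, the substitution `u = s ^ b` turns the integral for
`r ↦ ℓ (r ^ b)` into `b⁻¹ * F (r ^ b)`. The growth quantity of `r ↦ ℓ (r ^ b)` at
level `a` is therefore `b⁻¹` times that of `ℓ` at level `a / b`, taken at `r ^ b > 1`.
-/

open MeasureTheory

/-- The class 𝒢 of positive continuous functions satisfying the integral growth condition. -/
def memG (ℓ : ℝ → ℝ) : Prop :=
  ContinuousOn ℓ (Set.Ioi 0) ∧ (∀ r > 0, 0 < ℓ r) ∧
    ∀ a > 0, ∃ C > 0, ∀ r > 1,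
      (∫ s in (1:ℝ)..r, ℓ s / s) *
        Real.exp (-(a / ℓ r) * ∫ s in (1:ℝ)..r, ℓ s / s) ≤ C

open Set Real intervalIntegral

theorem intervalIntegral.integral_comp_rpow_div_self {g : ℝ → ℝ} (hg : ContinuousOn g (Ioi 0))
    {a r b : ℝ} (ha : 0 < a) (hr : 0 < r) (hb : b ≠ 0) :
    ∫ s in a..r, g (s ^ b) / s = b⁻¹ * ∫ u in a ^ b..r ^ b, g u / u := by
  have hpos : ∀ s ∈ uIcc a r, 0 < s := fun s hs => (lt_min ha hr).trans_le hs.1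
  have hmaps : MapsTo (· ^ b) (uIcc a r) (Ioi 0) := fun s hs => rpow_pos_of_pos (hpos s hs) b
  rw [← integral_comp_mul_deriv' (f := (· ^ b)) (f' := fun s => b * s ^ (b - 1))
    (g := fun u => g u / u)
    (fun s hs => by simpa using hasDerivAt_rpow_const (p := b) (Or.inl (hpos s hs).ne'))
    (continuousOn_const.mul (continuousOn_id.rpow_const fun s hs => Or.inl (hpos s hs).ne'))
    ((hg.div continuousOn_id fun u hu => (mem_Ioi.mp hu).ne').mono hmaps.image_subset),
    ← integral_const_mul]
  refine integral_congr fun s hs => ?_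
  have hs := hpos s hs
  simp only [Function.comp, rpow_sub hs, rpow_one]
  field_simp [(rpow_pos_of_pos hs b).ne']

theorem memG.comp_rpow {ℓ : ℝ → ℝ} (h : memG ℓ) {b : ℝ} (hb : 0 < b) :
    memG fun r => ℓ (r ^ b) := by
  obtain ⟨hcont, hpos, hbound⟩ := h
  have hmaps : MapsTo (· ^ b) (Ioi (0 : ℝ)) (Ioi 0) := fun r hr => rpow_pos_of_pos hr b
  refine ⟨hcont.comp (continuousOn_id.rpow_const fun r hr => Or.inl (ne_of_gt hr)) hmaps,
    fun r hr => hpos _ (hmaps hr), fun a ha => ?_⟩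
  obtain ⟨C, hC, hCle⟩ := hbound (a / b) (div_pos ha hb)
  refine ⟨C / b, div_pos hC hb, fun r hr => ?_⟩
  set I := ∫ u in (1 : ℝ)..r ^ b, ℓ u / u
  have hI : ∫ s in (1 : ℝ)..r, ℓ (s ^ b) / s = b⁻¹ * I := by
    rw [integral_comp_rpow_div_self hcont one_pos (one_pos.trans hr) hb.ne', one_rpow]
  have hexp : -(a / ℓ (r ^ b)) * (b⁻¹ * I) = -(a / b / ℓ (r ^ b)) * I := by ring
  calc (∫ s in (1 : ℝ)..r, ℓ (s ^ b) / s) *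
        exp (-(a / ℓ (r ^ b)) * ∫ s in (1 : ℝ)..r, ℓ (s ^ b) / s)
      = b⁻¹ * (I * exp (-(a / b / ℓ (r ^ b)) * I)) := by rw [hI, hexp, mul_assoc]
    _ ≤ b⁻¹ * C := by
      gcongr
      exact hCle _ (one_lt_rpow hr hb)
    _ = C / b := inv_mul_eq_div b C

theorem stmt_9 (ℓ : ℝ → ℝ) (h : memG ℓ) :
    ∀ b > 0, memG (fun r => ℓ (r ^ b)) := by
  intro b hb
  simpa only [← rpow_natCast] using h.comp_rpow (Nat.cast_pos.mpr hb)
end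

section
/- Let 𝒢 be the class of continuous ℓ:(0,∞)→(0,∞) such that for each a>0, sup_{r>1} (∫_1^r ℓ(s)/s ds) exp(−(a/ℓ(r)) ∫_1^r ℓ(s)/s ds) < ∞. If ℓ₁ ∈ 𝒢 and ℓ₂:(0,∞)→(0,∞) is increasing with ℓ₂(r) ≥ c > 0 for all r ≥ 1, then ℓ₁/ℓ₂ ∈ 𝒢. -/
open MeasureTheory

theorem stmt_10 (ℓ₁ ℓ₂ : ℝ → ℝ) (c : ℝ) (hc : 0 < c)
    (h₁ : memG ℓ₁) (h₂pos : ∀ r > 0, 0 < ℓ₂ r)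
    (h₂cont : ContinuousOn ℓ₂ (Set.Ioi 0))
    (h₂mono : MonotoneOn ℓ₂ (Set.Ioi 0))
    (h₂lb : ∀ r ≥ (1:ℝ), c ≤ ℓ₂ r) :
    memG (fun r => ℓ₁ r / ℓ₂ r) := by
  obtain ⟨h₁cont, h₁pos, h₁est⟩ := h₁
  refine ⟨h₁cont.div h₂cont (fun x hx => (h₂pos x hx).ne'), ?_, ?_⟩
  · intro r hr; exact div_pos (h₁pos r hr) (h₂pos r hr)
  · intro a ha
    obtain ⟨C, hC, hCest⟩ := h₁est a ha
    refine ⟨C / c, div_pos hC hc, ?_⟩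
    intro r hr
    have hr0 : (0:ℝ) < r := lt_trans one_pos hr
    have hsub : Set.uIcc (1:ℝ) r ⊆ Set.Ioi 0 := by
      rw [Set.uIcc_of_le hr.le]
      intro x hx
      exact lt_of_lt_of_le one_pos hx.1
    have hmem : ∀ x ∈ Set.Icc (1:ℝ) r, x ∈ Set.Ioi (0:ℝ) := by
      intro x hx; exact lt_of_lt_of_le one_pos hx.1
    have hxne : ∀ x ∈ Set.uIcc (1:ℝ) r, x ≠ 0 := fun x hx => (hsub hx).ne'
    have hint1 : IntervalIntegrable (fun s => ℓ₁ s / s) volume 1 r :=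
      ((h₁cont.mono hsub).div continuousOn_id hxne).intervalIntegrable
    have hint2 : IntervalIntegrable (fun s => ℓ₁ s / ℓ₂ s / s) volume 1 r :=
      (((h₁cont.mono hsub).div (h₂cont.mono hsub)
        (fun x hx => (h₂pos x (hsub hx)).ne')).div continuousOn_id hxne).intervalIntegrable
    set I := ∫ s in (1:ℝ)..r, ℓ₁ s / s with hI
    set F := ∫ s in (1:ℝ)..r, ℓ₁ s / ℓ₂ s / s with hF
    have hr1 : r ∈ Set.Ioi (0:ℝ) := hr0
    have hFle : F ≤ I / c := by
      rw [hI, hF, div_eq_mul_inv I, ← intervalIntegral.integral_mul_const]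
      apply intervalIntegral.integral_mono_on hr.le hint2 (hint1.mul_const _)
      intro x hx
      have hx0 : (0:ℝ) < x := hmem x hx
      have h2x : 0 < ℓ₂ x := h₂pos x hx0
      rw [div_div, show ℓ₁ x / x * c⁻¹ = ℓ₁ x / (c * x) by rw [mul_comm c x, ← div_div]; exact (div_eq_mul_inv _ _).symm]
      gcongr
      all_goals first
        | exact (h₁pos x hx0).le
        | positivity
        | exact h₂lb x hx.1
    have hIle : I ≤ ℓ₂ r * F := by
      rw [hI, hF, ← intervalIntegral.integral_const_mul]
      apply intervalIntegral.integral_mono_on hr.le hint1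
      · exact hint2.const_mul _
      · intro x hx
        have hx0 : (0:ℝ) < x := hmem x hx
        have h2x : 0 < ℓ₂ x := h₂pos x hx0
        have : ℓ₁ x / x = ℓ₂ x * (ℓ₁ x / ℓ₂ x / x) := by
          field_simp
        rw [this]
        gcongr
        · exact div_nonneg (div_nonneg (h₁pos x hx0).le h2x.le) hx0.le
        · exact h₂mono hx0 hr1 hx.2
    have hI0 : 0 ≤ I := by
      rw [hI]
      apply intervalIntegral.integral_nonneg hr.le
      intro x hx
      have hx0 : (0:ℝ) < x := hmem x hx
      exact div_nonneg (h₁pos x hx0).le hx0.le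
    have h1r : 0 < ℓ₁ r := h₁pos r hr0
    have h2r : 0 < ℓ₂ r := h₂pos r hr0
    have hexp : Real.exp (-(a / (ℓ₁ r / ℓ₂ r)) * F) ≤ Real.exp (-(a / ℓ₁ r) * I) := by
      apply Real.exp_le_exp.mpr
      have : -(a / (ℓ₁ r / ℓ₂ r)) * F = -(a / ℓ₁ r) * (ℓ₂ r * F) := by
        rw [div_div_eq_mul_div]; ring
      rw [this]
      have ha' : 0 < a / ℓ₁ r := div_pos ha h1r
      nlinarith
    calc F * Real.exp (-(a / (ℓ₁ r / ℓ₂ r)) * F)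
        ≤ (I / c) * Real.exp (-(a / (ℓ₁ r / ℓ₂ r)) * F) := by
          exact mul_le_mul_of_nonneg_right hFle (Real.exp_pos _).le
      _ ≤ (I / c) * Real.exp (-(a / ℓ₁ r) * I) := by
          exact mul_le_mul_of_nonneg_left hexp (div_nonneg hI0 hc.le)
      _ = (I * Real.exp (-(a / ℓ₁ r) * I)) / c := by ring
      _ ≤ C / c := by
          gcongr
          exact hCest r hr
end

section
/- For b ∈ (0, 1/2), the function ℓ(r) = exp((log(1+r))^b) − 1 belongs to the class 𝒢: for every a>0 there is C(a)>0 with sup_{r>1} (∫_1^r ℓ(s)/s ds) exp(−(a/ℓ(r)) ∫_1^r ℓ(s)/s ds) ≤ C(a). -/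
/-!
Write `L = log (1 + r)` and `F(r) = ∫₁ʳ ℓ(s)/s ds`. Since `ℓ` is increasing, `F(r) ≤ ℓ(r) log r ≤ L e^{L^b}`.
Keeping only the part of the integral over `[u, r]`, where `log (1 + u) = L - L^{1-b}`, gives
`F(r) ≥ ℓ(u) L^{1-b}`; as `t ↦ t^{b-1}` decreases, `(L - L^{1-b})^b ≥ L^b - 1`, so `ℓ(u) ≥ ℓ(r)/(2e)` and
`F(r)/ℓ(r) ≥ L^{1-b}/(2e)`. Hence `F e^{-aF/ℓ} ≤ L e^{L^b - a L^{1-b}/(2e)}`, which tends to `0` because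
`b < 1/2` makes `L^{1-b}` dominate `L^b + log L`. Bounded `r` are handled by the monotonicity of `F`.
-/
open MeasureTheory

open Real Set Filter

section LogIntegral

variable {ℓ : ℝ → ℝ}

theorem intervalIntegrable_div_self_of_continuousOn (hℓ : ContinuousOn ℓ (Ioi 0)) {u v : ℝ}
    (hu : 0 < u) (hv : 0 < v) : IntervalIntegrable (fun s => ℓ s / s) volume u v := by
  have hsub : uIcc u v ⊆ Ioi 0 := fun s hs => lt_of_lt_of_le (lt_min hu hv) hs.1
  exact ((hℓ.mono hsub).div continuousOn_id fun s hs => (hsub hs).ne').intervalIntegrable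

theorem intervalIntegrable_div_self_of_monotoneOn (hℓ : MonotoneOn ℓ (Ici 1)) {u v : ℝ}
    (hu : 1 ≤ u) (hv : 1 ≤ v) : IntervalIntegrable (fun s => ℓ s / s) volume u v := by
  have hsub : uIcc u v ⊆ Ici 1 := fun s hs => le_trans (le_min hu hv) hs.1
  simp only [div_eq_mul_inv]
  exact ((hℓ.mono hsub).intervalIntegrable).mul_continuousOn
    (continuousOn_inv₀.mono fun s hs => (zero_lt_one.trans_le (hsub hs)).ne')

theorem integral_div_self_nonneg (hℓ : ∀ s ≥ 1, 0 ≤ ℓ s) {r : ℝ} (hr : 1 ≤ r) :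
    0 ≤ ∫ s in (1:ℝ)..r, ℓ s / s :=
  intervalIntegral.integral_nonneg hr fun s hs => div_nonneg (hℓ s hs.1) (by linarith [hs.1])

theorem integral_div_self_le_of_le (hcont : ContinuousOn ℓ (Ioi 0)) (hℓ : ∀ s ≥ 1, 0 ≤ ℓ s)
    {r R : ℝ} (hr : 1 ≤ r) (hrR : r ≤ R) :
    ∫ s in (1:ℝ)..r, ℓ s / s ≤ ∫ s in (1:ℝ)..R, ℓ s / s := by
  refine intervalIntegral.integral_mono_interval le_rfl hr hrR ?_
    (intervalIntegrable_div_self_of_continuousOn hcont one_pos (by linarith))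
  refine (ae_restrict_iff' measurableSet_Ioc).2 (Eventually.of_forall fun s hs => ?_)
  exact div_nonneg (hℓ s hs.1.le) (by linarith [hs.1])

theorem integral_div_self_le_mul_log (hℓ : MonotoneOn ℓ (Ici 1)) {r : ℝ} (hr : 1 ≤ r) :
    ∫ s in (1:ℝ)..r, ℓ s / s ≤ ℓ r * log r := by
  calc ∫ s in (1:ℝ)..r, ℓ s / s ≤ ∫ s in (1:ℝ)..r, ℓ r / s := by
        refine intervalIntegral.integral_mono_on hr
          (intervalIntegrable_div_self_of_monotoneOn hℓ le_rfl hr)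
          (intervalIntegrable_div_self_of_monotoneOn monotoneOn_const le_rfl hr) fun s hs => ?_
        exact div_le_div_of_nonneg_right (hℓ hs.1 (mem_Ici.2 hr) hs.2) (by linarith [hs.1])
    _ = ℓ r * log r := by
        simp only [div_eq_mul_inv]
        rw [intervalIntegral.integral_const_mul, integral_inv_of_pos one_pos (by linarith), div_one]

theorem mul_log_div_le_integral_div_self (hℓ : MonotoneOn ℓ (Ici 1)) (hnn : ∀ s ≥ 1, 0 ≤ ℓ s)
    {u r : ℝ} (hu : 1 ≤ u) (hur : u ≤ r) :
    ℓ u * log (r / u) ≤ ∫ s in (1:ℝ)..r, ℓ s / s := by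
  have hsplit := intervalIntegral.integral_add_adjacent_intervals
    (intervalIntegrable_div_self_of_monotoneOn hℓ le_rfl hu)
    (intervalIntegrable_div_self_of_monotoneOn hℓ hu (hu.trans hur))
  have htail : ℓ u * log (r / u) ≤ ∫ s in u..r, ℓ s / s := calc
    ℓ u * log (r / u) = ∫ s in u..r, ℓ u / s := by
        simp only [div_eq_mul_inv (ℓ u)]
        rw [intervalIntegral.integral_const_mul, integral_inv_of_pos (by linarith) (by linarith)]
    _ ≤ ∫ s in u..r, ℓ s / s := by
        refine intervalIntegral.integral_mono_on hur
          (intervalIntegrable_div_self_of_monotoneOn monotoneOn_const hu (hu.trans hur))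
          (intervalIntegrable_div_self_of_monotoneOn hℓ hu (hu.trans hur)) fun s hs => ?_
        exact div_le_div_of_nonneg_right (hℓ (mem_Ici.2 hu) (mem_Ici.2 (hu.trans hs.1)) hs.1)
          (by linarith [hs.1])
  linarith [integral_div_self_nonneg hnn hu]

theorem memG_of_eventually_le (hcont : ContinuousOn ℓ (Ioi 0)) (hpos : ∀ r > 0, 0 < ℓ r)
    (h : ∀ a > 0, ∃ C, ∀ᶠ r in atTop,
      (∫ s in (1:ℝ)..r, ℓ s / s) * exp (-(a / ℓ r) * ∫ s in (1:ℝ)..r, ℓ s / s) ≤ C) :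
    memG ℓ := by
  have hnn : ∀ s ≥ 1, 0 ≤ ℓ s := fun s hs => (hpos s (by linarith)).le
  refine ⟨hcont, hpos, fun a ha => ?_⟩
  obtain ⟨C, hC⟩ := h a ha
  obtain ⟨R, hR⟩ := eventually_atTop.1 hC
  set R' := max R 1
  have hFR' := integral_div_self_nonneg hnn (le_max_right R 1)
  refine ⟨max C (∫ s in (1:ℝ)..R', ℓ s / s) + 1, by positivity, fun r hr => ?_⟩
  rcases le_total R r with hRr | hrR
  · linarith [hR r hRr, le_max_left C (∫ s in (1:ℝ)..R', ℓ s / s)]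
  · have hF := integral_div_self_nonneg hnn hr.le
    have hexp : exp (-(a / ℓ r) * ∫ s in (1:ℝ)..r, ℓ s / s) ≤ 1 := by
      have := hpos r (by linarith)
      rw [exp_le_one_iff, neg_mul, neg_nonpos]
      positivity
    calc (∫ s in (1:ℝ)..r, ℓ s / s) * exp (-(a / ℓ r) * ∫ s in (1:ℝ)..r, ℓ s / s)
        ≤ ∫ s in (1:ℝ)..r, ℓ s / s := mul_le_of_le_one_right hF hexp
      _ ≤ ∫ s in (1:ℝ)..R', ℓ s / s :=
          integral_div_self_le_of_le hcont hnn hr.le (hrR.trans (le_max_left R 1))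
      _ ≤ _ := by linarith [le_max_right C (∫ s in (1:ℝ)..R', ℓ s / s)]

end LogIntegral

noncomputable def expLogRpow (b r : ℝ) : ℝ := exp (log (1 + r) ^ b) - 1

theorem expLogRpow_pos (b : ℝ) {r : ℝ} (hr : 0 < r) : 0 < expLogRpow b r := by
  have : 0 < log (1 + r) ^ b := rpow_pos_of_pos (log_pos (by linarith)) b
  unfold expLogRpow
  linarith [add_one_lt_exp this.ne']

theorem continuousOn_expLogRpow (b : ℝ) : ContinuousOn (expLogRpow b) (Ioi 0) := by
  have hlog : ContinuousOn (fun r : ℝ => log (1 + r)) (Ioi 0) :=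
    (continuous_const.add continuous_id).continuousOn.log fun r hr =>
      (by linarith [mem_Ioi.1 hr] : (0:ℝ) < 1 + r).ne'
  exact ((hlog.rpow_const fun r hr => Or.inl (log_pos (by linarith [mem_Ioi.1 hr])).ne').rexp).sub
    continuousOn_const

theorem monotoneOn_expLogRpow {b : ℝ} (hb : 0 ≤ b) : MonotoneOn (expLogRpow b) (Ici 0) := by
  intro s hs t _ hst
  have hs0 : 0 ≤ log (1 + s) := log_nonneg (by linarith [mem_Ici.1 hs])
  have : log (1 + s) ≤ log (1 + t) := log_le_log (by linarith [mem_Ici.1 hs]) (by linarith)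
  unfold expLogRpow
  gcongr

theorem rpow_sub_one_le_rpow_sub_rpow {b L : ℝ} (hb0 : 0 < b) (hb1 : b ≤ 1) (hL : 1 < L) :
    L ^ b - 1 ≤ (L - L ^ (1 - b)) ^ b := by
  have hL0 : 0 < L := by linarith
  have hδ : L ^ (1 - b) < L := by
    simpa using rpow_lt_rpow_of_exponent_lt hL (by linarith : 1 - b < 1)
  have hinv : L ^ (b - 1) * L ^ (1 - b) = 1 := by
    rw [← rpow_add hL0]; simp
  calc L ^ b - 1 = L ^ (b - 1) * (L - L ^ (1 - b)) := by
        rw [mul_sub, hinv, rpow_sub_one hL0.ne', div_mul_cancel₀ _ hL0.ne']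
    _ ≤ (L - L ^ (1 - b)) ^ (b - 1) * (L - L ^ (1 - b)) := by
        refine mul_le_mul_of_nonneg_right ?_ (sub_pos.2 hδ).le
        exact rpow_le_rpow_of_nonpos (sub_pos.2 hδ) (by linarith [rpow_pos_of_pos hL0 (1 - b)])
          (by linarith)
    _ = (L - L ^ (1 - b)) ^ b := by
        rw [rpow_sub_one (by linarith), div_mul_cancel₀ _ (by linarith)]

theorem expLogRpow_mul_rpow_le_integral {b r : ℝ} (hb0 : 0 < b) (hb1 : b ≤ 1) (hr : 0 < r)
    (hrb : 2 ≤ log (1 + r) ^ b) :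
    expLogRpow b r * log (1 + r) ^ (1 - b) ≤
      2 * exp 1 * ∫ s in (1:ℝ)..r, expLogRpow b s / s := by
  set L := log (1 + r)
  set δ := L ^ (1 - b)
  have hL0 : 0 ≤ L := log_nonneg (by linarith)
  have hL1 : 1 < L := by
    by_contra! h
    linarith [rpow_le_one hL0 h hb0.le]
  have hδ : δ * L ^ b = L := by rw [← rpow_add (by linarith)]; simp
  have hδ_half : δ ≤ L / 2 := by nlinarith [rpow_nonneg hL0 (1 - b)]
  have hLb_le : L ^ b ≤ L := rpow_le_self_of_one_le hL1.le hb1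
  set u := exp (L - δ) - 1
  have hu1 : 1 ≤ u := by linarith [add_one_le_exp (L - δ)]
  have hur : u ≤ r := by
    have : exp (L - δ) ≤ exp L := exp_le_exp.2 (by linarith [rpow_nonneg hL0 (1 - b)])
    rw [exp_log (by linarith)] at this
    linarith
  have hlog_u : log (1 + u) = L - δ := by simp [u]
  have hδ_log : δ ≤ log (r / u) := by
    rw [le_log_iff_exp_le (by positivity), le_div_iff₀ (by linarith)]
    have : u * exp δ = (1 + r) - exp δ := by
      rw [sub_mul, ← exp_add, sub_add_cancel, exp_log (by linarith), one_mul]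
    linarith [one_le_exp (rpow_nonneg hL0 (1 - b))]
  have hℓ : expLogRpow b r ≤ 2 * exp 1 * expLogRpow b u := by
    have hpow := rpow_sub_one_le_rpow_sub_rpow hb0 hb1 hL1
    have hE : 2 ≤ exp (L ^ b - 1) := by linarith [add_one_le_exp (L ^ b - 1)]
    have hsplit : exp (L ^ b) = exp 1 * exp (L ^ b - 1) := by rw [← exp_add]; ring_nf
    have hmono : exp (L ^ b - 1) ≤ exp ((L - δ) ^ b) := exp_le_exp.2 hpow
    unfold expLogRpow
    rw [hlog_u, hsplit]
    nlinarith [exp_pos 1]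
  have hmono : MonotoneOn (expLogRpow b) (Ici 1) :=
    (monotoneOn_expLogRpow hb0.le).mono (Ici_subset_Ici.2 zero_le_one)
  have hnn : ∀ s ≥ 1, 0 ≤ expLogRpow b s := fun s hs => (expLogRpow_pos b (by linarith)).le
  have hu_pos := expLogRpow_pos b (by linarith : 0 < u)
  calc expLogRpow b r * δ ≤ 2 * exp 1 * (expLogRpow b u * log (r / u)) := by
        have := mul_le_mul hℓ hδ_log (rpow_nonneg hL0 _) (by positivity)
        linarith
    _ ≤ 2 * exp 1 * ∫ s in (1:ℝ)..r, expLogRpow b s / s := by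
        gcongr
        exact mul_log_div_le_integral_div_self hmono hnn hu1 hur

theorem eventually_mul_exp_rpow_le_exp_rpow {b k : ℝ} (hb0 : 0 < b) (hb : b < 1 / 2) (hk : 0 < k) :
    ∀ᶠ L in atTop, L * exp (L ^ b) ≤ exp (k * L ^ (1 - b)) := by
  filter_upwards [(tendsto_rpow_atTop (by linarith : 0 < 1 - 2 * b)).eventually_ge_atTop
    ((1 + 1 / b) / k), eventually_gt_atTop 0] with L hL hL0
  have hlog : log L ≤ L ^ b / b := log_le_rpow_div hL0.le hb0
  have hsplit : L ^ (1 - b) = L ^ (1 - 2 * b) * L ^ b := by rw [← rpow_add hL0]; ring_nf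
  have hcoef : 1 + 1 / b ≤ k * L ^ (1 - 2 * b) := by rwa [div_le_iff₀' hk] at hL
  have hLb := rpow_pos_of_pos hL0 b
  calc L * exp (L ^ b) = exp (log L + L ^ b) := by rw [exp_add, exp_log hL0]
    _ ≤ exp (k * L ^ (1 - b)) := by
        refine exp_le_exp.2 ?_
        have : L ^ b / b = 1 / b * L ^ b := by ring
        rw [hsplit]
        nlinarith

theorem integral_expLogRpow_div_le {b r : ℝ} (hb : 0 ≤ b) (hr : 1 ≤ r) :
    ∫ s in (1:ℝ)..r, expLogRpow b s / s ≤ log (1 + r) * exp (log (1 + r) ^ b) := calc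
  ∫ s in (1:ℝ)..r, expLogRpow b s / s ≤ expLogRpow b r * log r :=
      integral_div_self_le_mul_log
        ((monotoneOn_expLogRpow hb).mono (Ici_subset_Ici.2 zero_le_one)) hr
  _ ≤ exp (log (1 + r) ^ b) * log (1 + r) :=
      mul_le_mul (by unfold expLogRpow; linarith) (log_le_log (by linarith) (by linarith))
        (log_nonneg hr) (exp_pos _).le
  _ = log (1 + r) * exp (log (1 + r) ^ b) := mul_comm _ _

theorem integral_expLogRpow_div_mul_exp_le {a b r : ℝ} (ha : 0 < a) (hb0 : 0 < b) (hb1 : b ≤ 1)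
    (hr : 1 < r) (hrb : 2 ≤ log (1 + r) ^ b) :
    (∫ s in (1:ℝ)..r, expLogRpow b s / s) *
        exp (-(a / expLogRpow b r) * ∫ s in (1:ℝ)..r, expLogRpow b s / s) ≤
      log (1 + r) * exp (log (1 + r) ^ b) *
        exp (-(a / (2 * exp 1) * log (1 + r) ^ (1 - b))) := by
  set F := ∫ s in (1:ℝ)..r, expLogRpow b s / s
  set k := a / (2 * exp 1)
  have hℓ := expLogRpow_pos b (by linarith : 0 < r)
  have hkF : k * (expLogRpow b r * log (1 + r) ^ (1 - b)) ≤ a * F := by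
    have : k * (2 * exp 1 * F) = a * F := by simp only [k]; field_simp
    linarith [mul_le_mul_of_nonneg_left (expLogRpow_mul_rpow_le_integral hb0 hb1 (by linarith) hrb)
      (by positivity : 0 ≤ k)]
  have hexponent : -(a / expLogRpow b r) * F ≤ -(k * log (1 + r) ^ (1 - b)) := by
    rw [neg_mul, neg_le_neg_iff]
    calc k * log (1 + r) ^ (1 - b)
        = k * (expLogRpow b r * log (1 + r) ^ (1 - b)) / expLogRpow b r := by field_simp
      _ ≤ a * F / expLogRpow b r := by gcongr
      _ = a / expLogRpow b r * F := by ring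
  exact mul_le_mul (integral_expLogRpow_div_le hb0.le hr.le) (exp_le_exp.2 hexponent)
    (exp_pos _).le (mul_nonneg (log_nonneg (by linarith)) (exp_pos _).le)

theorem stmt_12 (b : ℝ) (hb0 : 0 < b) (hb : b < 1 / 2) :
    memG (fun r => Real.exp (Real.log (1 + r) ^ b) - 1) := by
  show memG (expLogRpow b)
  refine memG_of_eventually_le (continuousOn_expLogRpow b) (fun r hr => expLogRpow_pos b hr)
    fun a ha => ⟨1, ?_⟩
  have hlog : Tendsto (fun r : ℝ => log (1 + r)) atTop atTop :=
    tendsto_log_atTop.comp (tendsto_atTop_add_const_left _ 1 tendsto_id)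
  filter_upwards [hlog.eventually (eventually_mul_exp_rpow_le_exp_rpow hb0 hb
      (by positivity : 0 < a / (2 * exp 1))),
    hlog.eventually ((tendsto_rpow_atTop hb0).eventually_ge_atTop 2), eventually_gt_atTop 1]
    with r hexp hrb hr
  refine (integral_expLogRpow_div_mul_exp_le ha hb0 (by linarith) hr hrb).trans ?_
  rw [exp_neg, ← div_eq_mul_inv, div_le_one (exp_pos _)]
  exact hexp
end

section
/- Let K, L, h:(0,∞)→(0,∞) with h = K + L, h strictly decreasing C¹ with h' = −2K/ρ, h a bijection onto (0,∞), and suppose ∫_a^∞ ρ^{-1}K(ρ) dρ ≤ h(a) for all a>0. Then for every b>0 and d ≥ 1 there is a constant C = C(b,d) such that sup_{t>0} ∫_{ℝ^d} t |x|^{-d} K(|x|) e^{−b t h(|x|)} dx ≤ C. -/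
open MeasureTheory

theorem stmt_15 (d : ℕ) (hd : 1 ≤ d) (K L h : ℝ → ℝ)
    (hKpos : ∀ r > 0, 0 < K r) (hLpos : ∀ r > 0, 0 < L r)
    (hsum : ∀ r > 0, h r = K r + L r)
    (hderiv : ∀ ρ > 0, HasDerivAt h (-2 * K ρ / ρ) ρ)
    (hanti : StrictAntiOn h (Set.Ioi 0))
    (hsurj : ∀ y > 0, ∃ r > 0, h r = y)
    (hKm : Measurable K) (hhm : Measurable h)
    (hint : ∀ a > 0, IntegrableOn (fun ρ => K ρ / ρ) (Set.Ioi a))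
    (htail : ∀ a > 0, (∫ ρ in Set.Ioi a, K ρ / ρ) ≤ h a) :
    ∀ b > 0, ∃ C > 0, ∀ t > 0,
      (∫ x : EuclideanSpace ℝ (Fin d),
        t * (K ‖x‖ / ‖x‖ ^ d) * Real.exp (-b * t * h ‖x‖)) ≤ C := by
  classical
  intro b hb
  have hhpos : ∀ r > 0, 0 < h r := fun r hr => by
    rw [hsum r hr]; exact add_pos (hKpos r hr) (hLpos r hr)
  haveI : Nontrivial (EuclideanSpace ℝ (Fin d)) :=
    Module.nontrivial_of_finrank_pos (R := ℝ)
      (by rw [finrank_euclideanSpace_fin]; omega)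
  have hvolpos : 0 < (volume (Metric.ball (0 : EuclideanSpace ℝ (Fin d)) 1)).toReal :=
    ENNReal.toReal_pos (Metric.measure_ball_pos _ _ one_pos).ne' measure_ball_lt_top.ne
  have hb2 : (0:ℝ) < 1 / (2 * b) + 1 := by positivity
  refine ⟨d * (volume (Metric.ball (0 : EuclideanSpace ℝ (Fin d)) 1)).toReal * (1 / (2 * b) + 1),
    by positivity, ?_⟩
  intro t ht
  obtain ⟨ρ0, hρ0pos, hρ0⟩ := hsurj (1 / t) (by positivity)
  -- the radial integrand
  set g : ℝ → ℝ := fun ρ => t * (K ρ / ρ) * Real.exp (-b * t * h ρ) with hgdef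
  have hgm : Measurable g :=
    ((hKm.div measurable_id).const_mul t).mul
      (Real.measurable_exp.comp (hhm.const_mul (-b * t)))
  have hg_nonneg : ∀ ρ > (0:ℝ), 0 ≤ g ρ := fun ρ hρ =>
    mul_nonneg (mul_nonneg ht.le (div_nonneg (hKpos ρ hρ).le hρ.le)) (Real.exp_nonneg _)
  -- the antiderivative
  set F : ℝ → ℝ := fun ρ => 1 / (2 * b) * Real.exp (-b * t * h ρ) with hFdef
  have hF : ∀ ρ > (0:ℝ), HasDerivAt F (g ρ) ρ := by
    intro ρ hρ
    have H := (((hderiv ρ hρ).const_mul (-b * t)).exp).const_mul (1 / (2 * b))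
    refine H.congr_deriv ?_
    have hρ' : ρ ≠ 0 := ne_of_gt hρ
    have hb' : b ≠ 0 := ne_of_gt hb
    show _ = t * (K ρ / ρ) * Real.exp (-b * t * h ρ)
    field_simp
  have hFpos : ∀ x, 0 < F x := fun x => by
    simp only [hFdef]; positivity
  have hFbound : F ρ0 ≤ 1 / (2 * b) := by
    simp only [hFdef]
    apply mul_le_of_le_one_right (by positivity)
    rw [Real.exp_le_one_iff]
    have : 0 < h ρ0 := hhpos ρ0 hρ0pos
    nlinarith [mul_pos (mul_pos hb ht) this]
  -- dyadic sequence
  set a : ℕ → ℝ := fun n => ρ0 / 2 ^ n with hadef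
  have ha_pos : ∀ n, 0 < a n := fun n => by simp only [hadef]; positivity
  have ha_lt : ∀ n, a (n + 1) < a n := fun n => by
    simp only [hadef]
    exact div_lt_div_of_pos_left hρ0pos (by positivity)
      (pow_lt_pow_right₀ one_lt_two (Nat.lt_succ_self n))
  have ha0 : a 0 = ρ0 := by simp [hadef]
  have hFdiff : ∀ n, 0 ≤ F (a n) - F (a (n + 1)) := by
    intro n
    have h1 : h (a n) < h (a (n + 1)) := hanti (ha_pos (n+1)) (ha_pos n) (ha_lt n)
    have : Real.exp (-b * t * h (a (n + 1))) ≤ Real.exp (-b * t * h (a n)) := by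
      apply Real.exp_le_exp.2
      nlinarith [mul_lt_mul_of_pos_left h1 (mul_pos hb ht)]
    simp only [hFdef]
    have hbb : (0:ℝ) ≤ 1 / (2 * b) := by positivity
    nlinarith [mul_le_mul_of_nonneg_left this hbb]
  -- step: lintegral over each dyadic piece
  have step : ∀ n, (∫⁻ ρ in Set.Ioc (a (n + 1)) (a n), ENNReal.ofReal (g ρ))
      = ENNReal.ofReal (F (a n) - F (a (n + 1))) := by
    intro n
    have hInt : IntegrableOn g (Set.Ioc (a (n + 1)) (a n)) := by
      have hbig : IntegrableOn (fun ρ => t * (K ρ / ρ)) (Set.Ioc (a (n + 1)) (a n)) :=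
        IntegrableOn.mono_set ((hint _ (ha_pos (n + 1))).const_mul t)
          Set.Ioc_subset_Ioi_self
      refine hbig.mono' hgm.aestronglyMeasurable ?_
      filter_upwards [ae_restrict_mem measurableSet_Ioc] with ρ hρ
      have hρ0' : 0 < ρ := lt_trans (ha_pos (n + 1)) hρ.1
      rw [Real.norm_eq_abs, abs_of_nonneg (hg_nonneg ρ hρ0')]
      simp only [hgdef]
      apply mul_le_of_le_one_right (mul_nonneg ht.le (div_nonneg (hKpos ρ hρ0').le hρ0'.le))
      rw [Real.exp_le_one_iff]
      have := hhpos ρ hρ0'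
      nlinarith [mul_pos (mul_pos hb ht) this]
    have hInt' : IntervalIntegrable g volume (a (n + 1)) (a n) := by
      rw [intervalIntegrable_iff_integrableOn_Ioc_of_le (ha_lt n).le]
      exact hInt
    have hFT := intervalIntegral.integral_eq_sub_of_hasDerivAt
      (f := F) (f' := g) (fun ρ hρ => by
        rw [Set.uIcc_of_le (ha_lt n).le] at hρ
        exact hF ρ (lt_of_lt_of_le (ha_pos (n + 1)) hρ.1)) hInt'
    rw [intervalIntegral.integral_of_le (ha_lt n).le] at hFT
    calc (∫⁻ ρ in Set.Ioc (a (n + 1)) (a n), ENNReal.ofReal (g ρ))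
        = ENNReal.ofReal (∫ ρ in Set.Ioc (a (n + 1)) (a n), g ρ) := by
          rw [ofReal_integral_eq_lintegral_ofReal hInt ?_]
          filter_upwards [ae_restrict_mem measurableSet_Ioc] with ρ hρ
          exact hg_nonneg ρ (lt_trans (ha_pos (n + 1)) hρ.1)
      _ = ENNReal.ofReal (F (a n) - F (a (n + 1))) := by rw [hFT]
  -- the dyadic pieces cover (0, ρ0]
  have cover : Set.Ioc (0:ℝ) ρ0 ⊆ ⋃ n, Set.Ioc (a (n + 1)) (a n) := by
    intro x hx
    have hx0 : 0 < x := hx.1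
    have hex : ∃ n, a (n + 1) < x := by
      obtain ⟨n, hn⟩ := pow_unbounded_of_one_lt (ρ0 / x) one_lt_two
      refine ⟨n, ?_⟩
      have h1 : ρ0 < 2 ^ n * x := by
        rw [div_lt_iff₀ hx0] at hn; linarith [hn]
      have h2 : (2:ℝ) ^ n * x ≤ 2 ^ (n + 1) * x := by
        have : (2:ℝ) ^ n ≤ 2 ^ (n + 1) :=
          pow_le_pow_right₀ one_le_two (Nat.le_succ n)
        nlinarith
      simp only [hadef]
      rw [div_lt_iff₀ (by positivity : (0:ℝ) < 2 ^ (n + 1))]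
      nlinarith
    refine Set.mem_iUnion.2 ⟨Nat.find hex, Nat.find_spec hex, ?_⟩
    by_cases hzero : Nat.find hex = 0
    · rw [hzero, ha0]; exact hx.2
    · obtain ⟨m, hm⟩ := Nat.exists_eq_succ_of_ne_zero hzero
      have hmin := Nat.find_min hex (by omega : m < Nat.find hex)
      rw [hm]
      exact le_of_not_gt hmin
  -- head bound
  have head : (∫⁻ ρ in Set.Ioc (0:ℝ) ρ0, ENNReal.ofReal (g ρ))
      ≤ ENNReal.ofReal (1 / (2 * b)) := by
    calc (∫⁻ ρ in Set.Ioc (0:ℝ) ρ0, ENNReal.ofReal (g ρ))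
        ≤ ∫⁻ ρ in ⋃ n, Set.Ioc (a (n + 1)) (a n), ENNReal.ofReal (g ρ) :=
          lintegral_mono_set cover
      _ ≤ ∑' n, ∫⁻ ρ in Set.Ioc (a (n + 1)) (a n), ENNReal.ofReal (g ρ) :=
          lintegral_iUnion_le _ _
      _ = ∑' n, ENNReal.ofReal (F (a n) - F (a (n + 1))) := tsum_congr step
      _ ≤ ENNReal.ofReal (1 / (2 * b)) := by
          rw [ENNReal.tsum_eq_iSup_sum]
          refine iSup_le fun s => ?_
          obtain ⟨N, hN⟩ := s.exists_nat_subset_range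
          calc (∑ i ∈ s, ENNReal.ofReal (F (a i) - F (a (i + 1))))
              ≤ ∑ i ∈ Finset.range N, ENNReal.ofReal (F (a i) - F (a (i + 1))) :=
                Finset.sum_le_sum_of_subset hN
            _ = ENNReal.ofReal (∑ i ∈ Finset.range N, (F (a i) - F (a (i + 1)))) :=
                (ENNReal.ofReal_sum_of_nonneg (fun i _ => hFdiff i)).symm
            _ = ENNReal.ofReal (F (a 0) - F (a N)) := by rw [Finset.sum_range_sub']
            _ ≤ ENNReal.ofReal (1 / (2 * b)) := by
                apply ENNReal.ofReal_le_ofReal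
                rw [ha0]
                linarith [hFpos (a N), hFbound]
  -- tail bound
  have tail : (∫⁻ ρ in Set.Ioi ρ0, ENNReal.ofReal (g ρ)) ≤ ENNReal.ofReal 1 := by
    calc (∫⁻ ρ in Set.Ioi ρ0, ENNReal.ofReal (g ρ))
        ≤ ∫⁻ ρ in Set.Ioi ρ0, ENNReal.ofReal (t * (K ρ / ρ)) := by
          refine lintegral_mono_ae ?_
          filter_upwards [ae_restrict_mem measurableSet_Ioi] with ρ hρ
          apply ENNReal.ofReal_le_ofReal
          have hρp : 0 < ρ := lt_trans hρ0pos hρ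
          simp only [hgdef]
          apply mul_le_of_le_one_right
            (mul_nonneg ht.le (div_nonneg (hKpos ρ hρp).le hρp.le))
          rw [Real.exp_le_one_iff]
          have := hhpos ρ hρp
          nlinarith [mul_pos (mul_pos hb ht) this]
      _ = ENNReal.ofReal (∫ ρ in Set.Ioi ρ0, t * (K ρ / ρ)) := by
          rw [ofReal_integral_eq_lintegral_ofReal ((hint ρ0 hρ0pos).const_mul t) ?_]
          filter_upwards [ae_restrict_mem measurableSet_Ioi] with ρ hρ
          exact mul_nonneg ht.le
            (div_nonneg (hKpos ρ (lt_trans hρ0pos hρ)).le (lt_trans hρ0pos hρ).le)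
      _ ≤ ENNReal.ofReal 1 := by
          apply ENNReal.ofReal_le_ofReal
          rw [integral_const_mul]
          have h1 := htail ρ0 hρ0pos
          have h2 : t * (∫ ρ in Set.Ioi ρ0, K ρ / ρ) ≤ t * (1 / t) := by
            rw [← hρ0]
            exact mul_le_mul_of_nonneg_left h1 ht.le
          rw [mul_one_div, div_self (ne_of_gt ht)] at h2
          exact h2
  -- combined radial bound
  have key : (∫⁻ ρ in Set.Ioi (0:ℝ), ENNReal.ofReal (g ρ))
      ≤ ENNReal.ofReal (1 / (2 * b) + 1) := by
    rw [← Set.Ioc_union_Ioi_eq_Ioi hρ0pos.le,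
      lintegral_union measurableSet_Ioi (Set.Ioc_disjoint_Ioi le_rfl)]
    calc (∫⁻ ρ in Set.Ioc (0:ℝ) ρ0, ENNReal.ofReal (g ρ))
          + ∫⁻ ρ in Set.Ioi ρ0, ENNReal.ofReal (g ρ)
        ≤ ENNReal.ofReal (1 / (2 * b)) + ENNReal.ofReal 1 := add_le_add head tail
      _ = ENNReal.ofReal (1 / (2 * b) + 1) := by
          rw [← ENNReal.ofReal_add (by positivity) zero_le_one]
  -- polar coordinates
  have polar : (∫ x : EuclideanSpace ℝ (Fin d),
        t * (K ‖x‖ / ‖x‖ ^ d) * Real.exp (-b * t * h ‖x‖))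
      = (Module.finrank ℝ (EuclideanSpace ℝ (Fin d)))
          • (volume (Metric.ball (0 : EuclideanSpace ℝ (Fin d)) 1)).toReal
          • ∫ y in Set.Ioi (0:ℝ), y ^ (Module.finrank ℝ (EuclideanSpace ℝ (Fin d)) - 1)
              • (t * (K y / y ^ d) * Real.exp (-b * t * h y)) :=
    MeasureTheory.integral_fun_norm_addHaar (volume : Measure (EuclideanSpace ℝ (Fin d)))
      (fun r => t * (K r / r ^ d) * Real.exp (-b * t * h r))
  have hfr : Module.finrank ℝ (EuclideanSpace ℝ (Fin d)) = d := finrank_euclideanSpace_fin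
  rw [hfr] at polar
  rw [polar]
  -- rewrite the inner integrand as g on (0,∞)
  have hcongr : ∀ y ∈ Set.Ioi (0:ℝ),
      y ^ (d - 1) • (t * (K y / y ^ d) * Real.exp (-b * t * h y)) = g y := by
    intro y hy
    have hy0 : (y:ℝ) ≠ 0 := ne_of_gt hy
    have hyd : y ^ d = y ^ (d - 1) * y := by
      rw [← pow_succ]; congr 1; omega
    simp only [smul_eq_mul, hgdef, hyd]
    have hpow : y ^ (d - 1) ≠ 0 := pow_ne_zero _ hy0
    field_simp
  have hinner : (∫ y in Set.Ioi (0:ℝ), y ^ (d - 1)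
        • (t * (K y / y ^ d) * Real.exp (-b * t * h y)))
      ≤ 1 / (2 * b) + 1 := by
    rw [setIntegral_congr_fun measurableSet_Ioi hcongr]
    rw [integral_eq_lintegral_of_nonneg_ae ?_ (hgm.aestronglyMeasurable.restrict)]
    · exact ENNReal.toReal_le_of_le_ofReal hb2.le key
    · filter_upwards [ae_restrict_mem measurableSet_Ioi] with ρ hρ
      exact hg_nonneg ρ hρ
  rw [nsmul_eq_mul, smul_eq_mul, ← mul_assoc]
  have hnonneg : (0:ℝ) ≤ (d:ℝ) * (volume (Metric.ball (0 : EuclideanSpace ℝ (Fin d)) 1)).toReal :=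
    mul_nonneg (Nat.cast_nonneg d) hvolpos.le
  calc (d:ℝ) * (volume (Metric.ball (0 : EuclideanSpace ℝ (Fin d)) 1)).toReal
        * ∫ y in Set.Ioi (0:ℝ), y ^ (d - 1) • (t * (K y / y ^ d) * Real.exp (-b * t * h y))
      ≤ (d:ℝ) * (volume (Metric.ball (0 : EuclideanSpace ℝ (Fin d)) 1)).toReal
        * (1 / (2 * b) + 1) := mul_le_mul_of_nonneg_left hinner hnonneg
    _ = _ := rfl
end

section
/- Let f:(0,∞)→(0,∞) be a strictly increasing continuous bijection with inverse f^{-1} satisfying f(R)/f(r) ≤ c(R/r)^{γ} for 0<r≤R with c,γ>0, let α ∈ (0,1) and d ≥ 1. Then there is a constant C>0 such that for all b>0, ∫_{f(1/b)^{-1/α}}^{∞} ∫_{b ≤ |y| ≤ f^{-1}(s^{-α})} ∫_{f(1/|y|)^{-1}}^{2s^{α}} (f^{-1}(1/r))^{d+1} s^{-α-1} dr dy ds ≤ C b^{-1}, where the inner spatial integral is over y ∈ ℝ^d. -/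
/-!
The upper scaling of `f` gives the lower scaling `finv v ≤ finv V * (c v / V) ^ β` of its inverse
for every `β ≤ 1 / γ`. With `β = 1 / (1 + γ)`, the `r`-integral is then at most a constant times
`(b ^ γ f (1/b)) ^ (-β) * s ^ (-α β - 1) * |y| ^ (-(d + 1 - β γ))`. As `d + 1 - β γ > d`, the
`y`-integral over `|y| ≥ b` converges in polar coordinates and contributes `b ^ (β γ - 1)`, and the
`s`-integral from `f (1/b) ^ (-1/α)` contributes `f (1/b) ^ β`, which cancels.
-/

open MeasureTheory Set Metric Module

theorem rpow_le_of_le_rpow_of_le_inv {t u β γ : ℝ} (ht : 0 ≤ t) (hu : 1 ≤ u) (hγ : 0 < γ)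
    (hβ : 0 ≤ β) (hβγ : β ≤ γ⁻¹) (htu : t ≤ u ^ γ) : t ^ β ≤ u :=
  calc t ^ β ≤ max 1 t ^ β := Real.rpow_le_rpow ht (le_max_right 1 t) hβ
    _ ≤ max 1 t ^ γ⁻¹ := Real.rpow_le_rpow_of_exponent_le (le_max_left 1 t) hβγ
    _ ≤ (u ^ γ) ^ γ⁻¹ := Real.rpow_le_rpow (by positivity)
        (max_le (Real.one_le_rpow hu hγ.le) htu) (inv_nonneg.2 hγ.le)
    _ = u := Real.rpow_rpow_inv (by linarith) hγ.ne'

theorem setIntegral_Ioc_rpow_neg_le {a T β : ℝ} (ha : 0 ≤ a) (hT : 0 ≤ T) (hβ : β < 1) :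
    ∫ r in Ioc a T, r ^ (-β) ≤ T ^ (1 - β) / (1 - β) := by
  have hint : IntegrableOn (fun r : ℝ => r ^ (-β)) (Ioc 0 T) :=
    (intervalIntegral.intervalIntegrable_rpow' (by linarith : (-1 : ℝ) < -β)).1
  calc ∫ r in Ioc a T, r ^ (-β) ≤ ∫ r in Ioc 0 T, r ^ (-β) :=
        setIntegral_mono_set hint
          ((ae_restrict_iff' measurableSet_Ioc).2 (.of_forall fun r hr => by
            have := hr.1; positivity))
          (Ioc_subset_Ioc_left ha).eventuallyLE
    _ = T ^ (1 - β) / (1 - β) := by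
      rw [← intervalIntegral.integral_of_le hT, integral_rpow (Or.inl (by linarith)),
        Real.zero_rpow (by linarith), sub_zero, neg_add_eq_sub]

theorem indicator_compl_ball_norm_rpow {E : Type*} [NormedAddCommGroup E] (b p : ℝ) :
    (ball (0 : E) b)ᶜ.indicator (fun x => ‖x‖ ^ (-p)) =
      fun x => (Ici b).indicator (fun ρ => ρ ^ (-p)) ‖x‖ := by
  ext x
  by_cases hx : b ≤ ‖x‖ <;> simp [indicator, hx]

theorem eqOn_pow_smul_indicator_Ici_rpow {n : ℕ} (hn : 0 < n) (b p : ℝ) :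
    EqOn (fun ρ : ℝ => ρ ^ (n - 1) • (Ici b).indicator (fun ρ => ρ ^ (-p)) ρ)
      ((Ici b).indicator fun ρ => ρ ^ ((n : ℝ) - 1 - p)) (Ioi 0) := by
  intro ρ (hρ : 0 < ρ)
  by_cases hbρ : b ≤ ρ
  · simp only [smul_eq_mul, indicator_of_mem (mem_Ici.2 hbρ)]
    rw [← Real.rpow_natCast, Nat.cast_pred hn, ← Real.rpow_add hρ, sub_eq_add_neg (_ - 1)]
  · simp [hbρ]

section Radial

variable {E : Type*} [NormedAddCommGroup E] [NormedSpace ℝ E] [FiniteDimensional ℝ E]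
  [MeasurableSpace E] [BorelSpace E] [Nontrivial E] (μ : Measure E) [μ.IsAddHaarMeasure]
  {b p : ℝ}

theorem integrableOn_compl_ball_norm_rpow (hb : 0 < b) (hp : finrank ℝ E < p) :
    IntegrableOn (fun x : E => ‖x‖ ^ (-p)) (ball 0 b)ᶜ μ := by
  rw [← integrable_indicator_iff measurableSet_ball.compl, indicator_compl_ball_norm_rpow,
    integrable_fun_norm_addHaar μ,
    integrableOn_congr_fun (eqOn_pow_smul_indicator_Ici_rpow finrank_pos b p) measurableSet_Ioi,
    integrableOn_indicator_iff measurableSet_Ici, inter_eq_left.2 (Ici_subset_Ioi.2 hb),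
    integrableOn_Ici_iff_integrableOn_Ioi]
  exact integrableOn_Ioi_rpow_of_lt (by linarith) hb

theorem setIntegral_compl_ball_norm_rpow (hb : 0 < b) (hp : finrank ℝ E < p) :
    ∫ x in (ball 0 b)ᶜ, ‖x‖ ^ (-p) ∂μ =
      finrank ℝ E * μ.real (ball 0 1) * (b ^ (finrank ℝ E - p) / (p - finrank ℝ E)) := by
  rw [← integral_indicator measurableSet_ball.compl, indicator_compl_ball_norm_rpow,
    integral_fun_norm_addHaar μ,
    setIntegral_congr_fun measurableSet_Ioi (eqOn_pow_smul_indicator_Ici_rpow finrank_pos b p),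
    integral_indicator measurableSet_Ici, Measure.restrict_restrict measurableSet_Ici,
    inter_eq_left.2 (Ici_subset_Ioi.2 hb), integral_Ici_eq_integral_Ioi,
    integral_Ioi_rpow_of_lt (by linarith) hb, nsmul_eq_mul, smul_eq_mul, mul_assoc,
    show (finrank ℝ E : ℝ) - 1 - p + 1 = finrank ℝ E - p by ring, neg_div, ← div_neg, neg_sub]

end Radial

structure IsUpperScalingPair (f finv : ℝ → ℝ) (c γ : ℝ) : Prop where
  const_pos : 0 < c
  exponent_pos : 0 < γ
  apply_pos : ∀ x > 0, 0 < f x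
  strictMonoOn : StrictMonoOn f (Ioi 0)
  left_inv : ∀ x > 0, finv (f x) = x
  right_inv : ∀ y > 0, 0 < finv y ∧ f (finv y) = y
  scaling : ∀ r R : ℝ, 0 < r → r ≤ R → f R / f r ≤ c * (R / r) ^ γ

namespace IsUpperScalingPair

variable {f finv : ℝ → ℝ} {c γ β : ℝ}

theorem inv_apply_pos (h : IsUpperScalingPair f finv c γ) {y : ℝ} (hy : 0 < y) : 0 < finv y :=
  (h.right_inv y hy).1

theorem monotoneOn_inv (h : IsUpperScalingPair f finv c γ) : MonotoneOn finv (Ioi 0) := by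
  intro u hu v hv huv
  refine (h.strictMonoOn.le_iff_le (h.inv_apply_pos hu) (h.inv_apply_pos hv)).1 ?_
  rw [(h.right_inv u hu).2, (h.right_inv v hv).2]
  exact huv

theorem inv_le_mul_rpow (h : IsUpperScalingPair f finv c γ) (hβ : 0 ≤ β) (hβγ : β ≤ γ⁻¹)
    {v V : ℝ} (hv : 0 < v) (hvV : v ≤ V) : finv v ≤ finv V * (c * v / V) ^ β := by
  have hV : 0 < V := hv.trans_le hvV
  have hc := h.const_pos
  have hx := h.inv_apply_pos hv
  have hxX : finv v ≤ finv V := h.monotoneOn_inv hv hV hvV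
  have hratio : V / (c * v) ≤ (finv V / finv v) ^ γ := by
    have := h.scaling _ _ hx hxX
    rw [(h.right_inv v hv).2, (h.right_inv V hV).2, div_le_iff₀ hv] at this
    rw [div_le_iff₀ (by positivity)]
    linarith
  have key : (V / (c * v)) ^ β ≤ finv V / finv v :=
    rpow_le_of_le_rpow_of_le_inv (by positivity) ((one_le_div hx).2 hxX) h.exponent_pos hβ
      hβγ hratio
  rw [← inv_div, Real.inv_rpow (by positivity), ← div_eq_mul_inv,
    le_div_iff₀ (Real.rpow_pos_of_pos (by positivity) _)]
  rwa [le_div_iff₀ hx, mul_comm] at key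

theorem setIntegral_Ioc_inv_pow_nonneg (h : IsUpperScalingPair f finv c γ) {a : ℝ} (ha : 0 ≤ a)
    (T : ℝ) (n : ℕ) : 0 ≤ ∫ r in Ioc a T, finv r⁻¹ ^ n :=
  setIntegral_nonneg measurableSet_Ioc fun _ hr =>
    pow_nonneg (h.inv_apply_pos (inv_pos.2 (ha.trans_lt hr.1))).le n

theorem setIntegral_Ioc_inv_pow_le (h : IsUpperScalingPair f finv c γ) (hβ0 : 0 ≤ β)
    (hβ1 : β < 1) (hβγ : β ≤ γ⁻¹) (n : ℕ) {V T : ℝ} (hV : 0 < V) (hT : 0 ≤ T) :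
    ∫ r in Ioc V⁻¹ T, finv r⁻¹ ^ (n + 1) ≤
      finv V ^ (n + 1) * (c / V) ^ β * (T ^ (1 - β) / (1 - β)) := by
  set K := finv V ^ (n + 1) * (c / V) ^ β with hK
  have hc := h.const_pos
  have hpoint : ∀ r ∈ Ioc V⁻¹ T, finv r⁻¹ ^ (n + 1) ≤ K * r ^ (-β) := by
    intro r hr
    have hr0 : 0 < r := (inv_pos.2 hV).trans hr.1
    have hrV : r⁻¹ ≤ V := inv_le_of_inv_le₀ hV hr.1.le
    have hx := h.inv_apply_pos (inv_pos.2 hr0)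
    have hmon : finv r⁻¹ ≤ finv V := h.monotoneOn_inv (inv_pos.2 hr0) hV hrV
    have hsplit : (c * r⁻¹ / V) ^ β = (c / V) ^ β * r ^ (-β) := by
      rw [mul_div_right_comm, Real.mul_rpow (by positivity) (by positivity),
        Real.inv_rpow hr0.le, Real.rpow_neg hr0.le]
    calc finv r⁻¹ ^ (n + 1) = finv r⁻¹ ^ n * finv r⁻¹ := pow_succ _ _
      _ ≤ finv V ^ n * (finv V * (c * r⁻¹ / V) ^ β) :=
        mul_le_mul (pow_le_pow_left₀ hx.le hmon n)
          (h.inv_le_mul_rpow hβ0 hβγ (inv_pos.2 hr0) hrV) hx.le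
          (pow_nonneg (hx.le.trans hmon) n)
      _ = K * r ^ (-β) := by rw [hsplit, hK]; ring
  have hint : IntegrableOn (fun r : ℝ => r ^ (-β)) (Ioc V⁻¹ T) :=
    (intervalIntegral.intervalIntegrable_rpow' (by linarith : (-1 : ℝ) < -β)).1.mono_set
      (Ioc_subset_Ioc_left (inv_pos.2 hV).le)
  have hK0 : 0 ≤ K := by have := h.inv_apply_pos hV; positivity
  calc ∫ r in Ioc V⁻¹ T, finv r⁻¹ ^ (n + 1) ≤ ∫ r in Ioc V⁻¹ T, K * r ^ (-β) :=
        setIntegral_mono_of_nonneg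
          (fun _ hr => pow_nonneg (h.inv_apply_pos (inv_pos.2
            ((inv_pos.2 hV).trans hr.1))).le _)
          hpoint (hint.const_mul K)
    _ = K * ∫ r in Ioc V⁻¹ T, r ^ (-β) := integral_const_mul K _
    _ ≤ K * (T ^ (1 - β) / (1 - β)) :=
      mul_le_mul_of_nonneg_left (setIntegral_Ioc_rpow_neg_le (inv_pos.2 hV).le hT hβ1) hK0

theorem setIntegral_Ioc_inv_pow_le_rpow (h : IsUpperScalingPair f finv c γ) (hβ0 : 0 ≤ β)
    (hβ1 : β < 1) (hβγ : β ≤ γ⁻¹) (n : ℕ) {b ρ T : ℝ} (hb : 0 < b) (hbρ : b ≤ ρ) (hT : 0 ≤ T) :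
    ∫ r in Ioc (f ρ⁻¹)⁻¹ T, finv r⁻¹ ^ (n + 1) ≤
      (c ^ 2 / (b ^ γ * f b⁻¹)) ^ β * (T ^ (1 - β) / (1 - β)) * ρ ^ (-(n + 1 - β * γ)) := by
  have hρ : 0 < ρ := hb.trans_le hbρ
  have hc := h.const_pos
  have hfρ := h.apply_pos _ (inv_pos.2 hρ)
  have hfb := h.apply_pos _ (inv_pos.2 hb)
  have hdecay : c / f ρ⁻¹ ≤ c ^ 2 / (b ^ γ * f b⁻¹) * ρ ^ γ := by
    have hscal := h.scaling _ _ (inv_pos.2 hρ) (inv_anti₀ hb hbρ)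
    rw [inv_div_inv, Real.div_rpow hρ.le hb.le, div_le_iff₀ hfρ] at hscal
    have hbγ := Real.rpow_pos_of_pos hb γ
    rw [div_le_iff₀ hfρ, div_mul_eq_mul_div, div_mul_eq_mul_div, le_div_iff₀ (by positivity)]
    calc c * (b ^ γ * f b⁻¹) ≤ c * (b ^ γ * (c * (ρ ^ γ / b ^ γ) * f ρ⁻¹)) := by gcongr
      _ = c ^ 2 * ρ ^ γ * f ρ⁻¹ := by field_simp
  have hdecayβ : (c / f ρ⁻¹) ^ β ≤ (c ^ 2 / (b ^ γ * f b⁻¹)) ^ β * ρ ^ (β * γ) := by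
    grw [hdecay]
    rw [Real.mul_rpow (by positivity) (by positivity), ← Real.rpow_mul hρ.le, mul_comm γ]
  have hpow : ρ⁻¹ ^ (n + 1) * ρ ^ (β * γ) = ρ ^ (-(n + 1 - β * γ)) := by
    rw [inv_pow, ← Real.rpow_natCast, ← Real.rpow_neg hρ.le, ← Real.rpow_add hρ]
    push_cast
    ring_nf
  calc ∫ r in Ioc (f ρ⁻¹)⁻¹ T, finv r⁻¹ ^ (n + 1)
      ≤ ρ⁻¹ ^ (n + 1) * (c / f ρ⁻¹) ^ β * (T ^ (1 - β) / (1 - β)) := by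
        simpa only [h.left_inv _ (inv_pos.2 hρ)] using
          h.setIntegral_Ioc_inv_pow_le hβ0 hβ1 hβγ n hfρ hT
    _ ≤ ρ⁻¹ ^ (n + 1) * ((c ^ 2 / (b ^ γ * f b⁻¹)) ^ β * ρ ^ (β * γ)) *
          (T ^ (1 - β) / (1 - β)) := by
        have : 0 ≤ T ^ (1 - β) / (1 - β) := div_nonneg (by positivity) (by linarith)
        gcongr
    _ = (c ^ 2 / (b ^ γ * f b⁻¹)) ^ β * (T ^ (1 - β) / (1 - β)) * ρ ^ (-(n + 1 - β * γ)) := by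
        rw [← hpow]; ring

theorem setIntegral_norm_setIntegral_Ioc_inv_pow_le {E : Type*} [NormedAddCommGroup E]
    [NormedSpace ℝ E] [FiniteDimensional ℝ E] [MeasurableSpace E] [BorelSpace E] [Nontrivial E]
    (μ : Measure E) [μ.IsAddHaarMeasure] (h : IsUpperScalingPair f finv c γ) (hβ0 : 0 ≤ β)
    (hβ1 : β < 1) (hβγ : β ≤ γ⁻¹) (hβγ1 : β * γ < 1) {b T : ℝ} (hb : 0 < b) (hT : 0 ≤ T)
    {S : Set E} (hS : S ⊆ (ball 0 b)ᶜ) :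
    ∫ y in S, (∫ r in Ioc (f ‖y‖⁻¹)⁻¹ T, finv r⁻¹ ^ (finrank ℝ E + 1)) ∂μ ≤
      (c ^ 2 / (b ^ γ * f b⁻¹)) ^ β * (T ^ (1 - β) / (1 - β)) *
        (finrank ℝ E * μ.real (ball 0 1) * (b ^ (β * γ - 1) / (1 - β * γ))) := by
  set K := (c ^ 2 / (b ^ γ * f b⁻¹)) ^ β * (T ^ (1 - β) / (1 - β))
  set p : ℝ := finrank ℝ E + 1 - β * γ
  have hp : finrank ℝ E < p := by simp only [p]; linarith
  have hK0 : 0 ≤ K := by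
    have := h.const_pos
    have := h.apply_pos _ (inv_pos.2 hb)
    have : 0 ≤ T ^ (1 - β) / (1 - β) := div_nonneg (by positivity) (by linarith)
    positivity
  have hint : IntegrableOn (fun y => K * ‖y‖ ^ (-p)) (ball 0 b)ᶜ μ :=
    (integrableOn_compl_ball_norm_rpow μ hb hp).const_mul K
  have hnorm : ∀ y ∈ S, b ≤ ‖y‖ := fun y hy => by simpa using hS hy
  calc ∫ y in S, (∫ r in Ioc (f ‖y‖⁻¹)⁻¹ T, finv r⁻¹ ^ (finrank ℝ E + 1)) ∂μ
      ≤ ∫ y in S, K * ‖y‖ ^ (-p) ∂μ :=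
        setIntegral_mono_of_nonneg
          (fun y hy => h.setIntegral_Ioc_inv_pow_nonneg
            (inv_pos.2 (h.apply_pos _ (inv_pos.2 (hb.trans_le (hnorm y hy))))).le _ _)
          (fun y hy => h.setIntegral_Ioc_inv_pow_le_rpow hβ0 hβ1 hβγ _ hb (hnorm y hy) hT)
          (hint.mono_set hS)
    _ ≤ ∫ y in (ball 0 b)ᶜ, K * ‖y‖ ^ (-p) ∂μ :=
        setIntegral_mono_set hint (.of_forall fun y => by positivity) hS.eventuallyLE
    _ = K * (finrank ℝ E * μ.real (ball 0 1) * (b ^ (β * γ - 1) / (1 - β * γ))) := by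
        rw [integral_const_mul, setIntegral_compl_ball_norm_rpow μ hb hp,
          show (finrank ℝ E : ℝ) - p = β * γ - 1 by ring, show p - finrank ℝ E = 1 - β * γ by ring]

theorem mul_setIntegral_norm_setIntegral_Ioc_le {E : Type*} [NormedAddCommGroup E]
    [NormedSpace ℝ E] [FiniteDimensional ℝ E] [MeasurableSpace E] [BorelSpace E] [Nontrivial E]
    (μ : Measure E) [μ.IsAddHaarMeasure] (h : IsUpperScalingPair f finv c γ) (hβ0 : 0 ≤ β)
    (hβ1 : β < 1) (hβγ : β ≤ γ⁻¹) (hβγ1 : β * γ < 1) {α b s : ℝ} (hb : 0 < b) (hs : 0 < s)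
    {S : Set E} (hS : S ⊆ (ball 0 b)ᶜ) :
    (∫ y in S, (∫ r in Ioc (f ‖y‖⁻¹)⁻¹ (2 * s ^ α), finv r⁻¹ ^ (finrank ℝ E + 1)) ∂μ) *
        s ^ (-α - 1) ≤
      (c ^ 2 / (b ^ γ * f b⁻¹)) ^ β * (2 ^ (1 - β) / (1 - β)) *
        (finrank ℝ E * μ.real (ball 0 1) * (b ^ (β * γ - 1) / (1 - β * γ))) *
          s ^ (-(α * β) - 1) := by
  have hpow : (2 * s ^ α) ^ (1 - β) * s ^ (-α - 1) = 2 ^ (1 - β) * s ^ (-(α * β) - 1) := by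
    rw [Real.mul_rpow (by norm_num) (by positivity), ← Real.rpow_mul hs.le, mul_assoc,
      ← Real.rpow_add hs]
    ring_nf
  calc _ ≤ (c ^ 2 / (b ^ γ * f b⁻¹)) ^ β * ((2 * s ^ α) ^ (1 - β) / (1 - β)) *
        (finrank ℝ E * μ.real (ball 0 1) * (b ^ (β * γ - 1) / (1 - β * γ))) * s ^ (-α - 1) := by
        gcongr
        exact h.setIntegral_norm_setIntegral_Ioc_inv_pow_le μ hβ0 hβ1 hβγ hβγ1 hb
          (by positivity) hS
    _ = _ := by
        linear_combination (c ^ 2 / (b ^ γ * f b⁻¹)) ^ β / (1 - β) *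
          (finrank ℝ E * μ.real (ball 0 1) * (b ^ (β * γ - 1) / (1 - β * γ))) * hpow

theorem integral_Ioi_annulus_Ioc_le {E : Type*} [NormedAddCommGroup E]
    [NormedSpace ℝ E] [FiniteDimensional ℝ E] [MeasurableSpace E] [BorelSpace E] [Nontrivial E]
    (μ : Measure E) [μ.IsAddHaarMeasure] (h : IsUpperScalingPair f finv c γ) (hβ0 : 0 < β)
    (hβ1 : β < 1) (hβγ : β ≤ γ⁻¹) (hβγ1 : β * γ < 1) {α b : ℝ} (hα : 0 < α) (hb : 0 < b) :
    (∫ s in Ioi (f b⁻¹ ^ (-(1 / α))),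
      ∫ y in {y : E | b ≤ ‖y‖ ∧ ‖y‖ ≤ finv (s ^ (-α))},
        (∫ r in Ioc (f ‖y‖⁻¹)⁻¹ (2 * s ^ α), finv r⁻¹ ^ (finrank ℝ E + 1) * s ^ (-α - 1)) ∂μ) ≤
      (c ^ 2) ^ β * (2 ^ (1 - β) / (1 - β)) *
        (finrank ℝ E * μ.real (ball 0 1) / (1 - β * γ)) / (α * β) * b⁻¹ := by
  set F := f b⁻¹
  have hF : 0 < F := h.apply_pos _ (inv_pos.2 hb)
  have hs₀ : 0 < F ^ (-(1 / α)) := Real.rpow_pos_of_pos hF _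
  have hαβ : 0 < α * β := by positivity
  have hnonneg : ∀ s ∈ Ioi (F ^ (-(1 / α))), 0 ≤
      (∫ y in {y : E | b ≤ ‖y‖ ∧ ‖y‖ ≤ finv (s ^ (-α))},
        (∫ r in Ioc (f ‖y‖⁻¹)⁻¹ (2 * s ^ α), finv r⁻¹ ^ (finrank ℝ E + 1)) ∂μ) * s ^ (-α - 1) :=
    fun s (hs : _ < s) => mul_nonneg
      (setIntegral_nonneg (measurable_norm measurableSet_Icc) fun y hy =>
        h.setIntegral_Ioc_inv_pow_nonneg
          (inv_pos.2 (h.apply_pos _ (inv_pos.2 (hb.trans_le hy.1)))).le _ _)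
      (Real.rpow_nonneg (hs₀.trans hs).le _)
  have hs₀pow : (F ^ (-(1 / α))) ^ (-(α * β)) = F ^ β := by
    rw [← Real.rpow_mul hF.le, show -(1 / α) * -(α * β) = β by field_simp]
  have hcancel : (c ^ 2 / (b ^ γ * F)) ^ β * b ^ (β * γ - 1) * F ^ β = (c ^ 2) ^ β * b⁻¹ := by
    rw [Real.div_rpow (by positivity) (by positivity), Real.mul_rpow (by positivity) hF.le,
      ← Real.rpow_mul hb.le, Real.rpow_sub_one hb.ne', mul_comm γ β]
    field_simp
  simp only [integral_mul_const]
  calc _ ≤ ∫ s in Ioi (F ^ (-(1 / α))), (c ^ 2 / (b ^ γ * F)) ^ β * (2 ^ (1 - β) / (1 - β)) *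
          (finrank ℝ E * μ.real (ball 0 1) * (b ^ (β * γ - 1) / (1 - β * γ))) *
            s ^ (-(α * β) - 1) :=
        setIntegral_mono_of_nonneg hnonneg
          (fun s (hs : _ < s) => h.mul_setIntegral_norm_setIntegral_Ioc_le μ hβ0.le hβ1 hβγ hβγ1
            hb (hs₀.trans hs) fun y hy => by simpa using hy.1)
          ((integrableOn_Ioi_rpow_of_lt (by linarith) hs₀).const_mul _)
    _ = (c ^ 2 / (b ^ γ * F)) ^ β * (2 ^ (1 - β) / (1 - β)) *
          (finrank ℝ E * μ.real (ball 0 1) * (b ^ (β * γ - 1) / (1 - β * γ))) *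
            (F ^ β / (α * β)) := by
        rw [integral_const_mul, integral_Ioi_rpow_of_lt (by linarith) hs₀, sub_add_cancel,
          neg_div_neg_eq, hs₀pow]
    _ = _ := by
        linear_combination (2 ^ (1 - β) / (1 - β)) *
          (finrank ℝ E * μ.real (ball 0 1) / (1 - β * γ)) / (α * β) * hcancel

end IsUpperScalingPair

theorem stmt_16_general (d : ℕ) (hd : 1 ≤ d) (f finv : ℝ → ℝ) (c γ α : ℝ)
    (hc : 0 < c) (hγ : 0 < γ) (hα0 : 0 < α)
    (hfpos : ∀ x > 0, 0 < f x)
    (hmono : StrictMonoOn f (Set.Ioi 0))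
    (hleft : ∀ x > 0, finv (f x) = x)
    (hright : ∀ y > 0, 0 < finv y ∧ f (finv y) = y)
    (hscal : ∀ r R : ℝ, 0 < r → r ≤ R → f R / f r ≤ c * (R / r) ^ γ) :
    ∃ C > 0, ∀ b > 0,
      (∫ s in Set.Ioi ((f b⁻¹) ^ (-(1 / α))),
        ∫ y in {y : EuclideanSpace ℝ (Fin d) | b ≤ ‖y‖ ∧ ‖y‖ ≤ finv (s ^ (-α))},
          ∫ r in Set.Ioc (f ‖y‖⁻¹)⁻¹ (2 * s ^ α),
            (finv r⁻¹) ^ (d + 1) * s ^ (-α - 1)) ≤ C * b⁻¹ := by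
  have h : IsUpperScalingPair f finv c γ := ⟨hc, hγ, hfpos, hmono, hleft, hright, hscal⟩
  have : Nontrivial (EuclideanSpace ℝ (Fin d)) := by
    have : Nonempty (Fin d) := ⟨⟨0, hd⟩⟩
    infer_instance
  set β := (1 + γ)⁻¹
  have hβ0 : 0 < β := by positivity
  have hβ1 : β < 1 := inv_lt_one_of_one_lt₀ (by linarith)
  have hβγ1 : β * γ < 1 := by
    rw [← div_eq_inv_mul, div_lt_one (by positivity)]; linarith
  have hvol : 0 < volume.real (ball (0 : EuclideanSpace ℝ (Fin d)) 1) :=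
    ENNReal.toReal_pos (measure_ball_pos _ _ one_pos).ne' measure_ball_lt_top.ne
  have hd' : (0 : ℝ) < d := by exact_mod_cast hd
  have : 0 < 1 - β := by linarith
  have : 0 < 1 - β * γ := by linarith
  refine ⟨(c ^ 2) ^ β * (2 ^ (1 - β) / (1 - β)) *
    (d * volume.real (ball (0 : EuclideanSpace ℝ (Fin d)) 1) / (1 - β * γ)) / (α * β),
    by positivity, fun b hb => ?_⟩
  have := h.integral_Ioi_annulus_Ioc_le (volume : Measure (EuclideanSpace ℝ (Fin d))) hβ0 hβ1
    (inv_anti₀ hγ (by linarith)) hβγ1 hα0 hb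
  rwa [finrank_euclideanSpace_fin] at this

theorem stmt_16 (d : ℕ) (hd : 1 ≤ d) (f finv : ℝ → ℝ) (c γ α : ℝ)
    (hc : 0 < c) (hγ : 0 < γ) (hα0 : 0 < α) (hα1 : α < 1)
    (hfpos : ∀ x > 0, 0 < f x)
    (hmono : StrictMonoOn f (Set.Ioi 0))
    (hcont : ContinuousOn f (Set.Ioi 0))
    (hleft : ∀ x > 0, finv (f x) = x)
    (hright : ∀ y > 0, 0 < finv y ∧ f (finv y) = y)
    (hscal : ∀ r R : ℝ, 0 < r → r ≤ R → f R / f r ≤ c * (R / r) ^ γ) :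
    ∃ C > 0, ∀ b > 0,
      (∫ s in Set.Ioi ((f b⁻¹) ^ (-(1 / α))),
        ∫ y in {y : EuclideanSpace ℝ (Fin d) | b ≤ ‖y‖ ∧ ‖y‖ ≤ finv (s ^ (-α))},
          ∫ r in Set.Ioc (f ‖y‖⁻¹)⁻¹ (2 * s ^ α),
            (finv r⁻¹) ^ (d + 1) * s ^ (-α - 1)) ≤ C * b⁻¹ :=
  stmt_16_general d hd f finv c γ α hc hγ hα0 hfpos hmono hleft hright hscal
end
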